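/- For every β ∈ ℝ \ {0} and ψ(x) = x + β, the composition operator C_ψ : 𝒪_M(ℝ) → 𝒪_M(ℝ) is mixing. -/

import Mathlib

open Filter Topology Set

noncomputable section

/-- A smooth real function is *slowly increasing* if each of its derivatives
grows at most polynomially. -/
def SlowlyIncreasing (f : ℝ → ℝ) : Prop :=
  ContDiff ℝ (⊤ : ℕ∞) f ∧
    ∀ j : ℕ, ∃ C : ℝ, 0 < C ∧ ∃ n : ℕ, ∀ x : ℝ,
      |iteratedDeriv j f x| ≤ C * (1 + x ^ 2) ^ n

/-- The space `𝒪_M(ℝ)` of slowly increasing smooth functions. -/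
structure OM : Type where
  toFun : ℝ → ℝ
  slowly : SlowlyIncreasing toFun

/-- The seminorm `p_{m,v}`, evaluated on a plain function. -/
def pOM (m : ℕ) (v : SchwartzMap ℝ ℝ) (f : ℝ → ℝ) : ℝ :=
  ⨆ (x : ℝ) (j : Fin (m + 1)), |v x * iteratedDeriv j.1 f x|

/-- The natural locally convex topology of `𝒪_M(ℝ)`, generated by the balls of the
seminorms `p_{m,v}`. -/
instance : TopologicalSpace OM :=
  TopologicalSpace.generateFrom
    { U : Set OM | ∃ (g : OM) (m : ℕ) (v : SchwartzMap ℝ ℝ) (ε : ℝ), 0 < ε ∧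
        U = { f : OM | pOM m v (fun x => f.toFun x - g.toFun x) < ε } }

/-- Topological transitivity. -/
def TopologicallyTransitive {X : Type*} [TopologicalSpace X] (T : X → X) : Prop :=
  ∀ U V : Set X, IsOpen U → IsOpen V → U.Nonempty → V.Nonempty →
    ∃ n : ℕ, 0 < n ∧ (T^[n] '' U ∩ V).Nonempty

/-- Topological mixing. -/
def TopologicallyMixing {X : Type*} [TopologicalSpace X] (T : X → X) : Prop :=
  ∀ U V : Set X, IsOpen U → IsOpen V → U.Nonempty → V.Nonempty →
    ∃ N : ℕ, ∀ n : ℕ, N ≤ n → (T^[n] '' U ∩ V).Nonempty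

/-- Sequential hypercyclicity: some orbit is sequentially dense. -/
def SequentiallyHypercyclic {X : Type*} [TopologicalSpace X] (T : X → X) : Prop :=
  ∃ g : X, ∀ f : X, ∃ u : ℕ → X,
    (∀ i : ℕ, ∃ n : ℕ, 0 < n ∧ u i = T^[n] g) ∧ Tendsto u atTop (𝓝 f)

/-- Hypercyclicity: some orbit is dense. -/
def Hypercyclic {X : Type*} [TopologicalSpace X] (T : X → X) : Prop :=
  ∃ g : X, Dense { x : X | ∃ n : ℕ, 0 < n ∧ x = T^[n] g }

/-- Chaos: topological transitivity together with a dense set of periodic points. -/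
def Chaotic {X : Type*} [TopologicalSpace X] (T : X → X) : Prop :=
  TopologicallyTransitive T ∧ Dense { x : X | ∃ n : ℕ, 0 < n ∧ T^[n] x = x }


namespace OMaux

open Real Polynomial

/-- Polynomials appearing in derivatives of the Gaussian. -/
def gPoly : ℕ → Polynomial ℝ
  | 0 => 1
  | n + 1 => derivative (gPoly n) - Polynomial.C 2 * Polynomial.X * gPoly n

lemma contDiff_gauss : ContDiff ℝ (⊤ : ℕ∞) (fun x : ℝ => Real.exp (-x^2)) :=
  Real.contDiff_exp.comp ((contDiff_id.pow 2).neg)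

lemma hasDerivAt_polygauss (p : Polynomial ℝ) (x : ℝ) :
    HasDerivAt (fun y : ℝ => p.eval y * Real.exp (-y^2))
      ((derivative p - Polynomial.C 2 * Polynomial.X * p).eval x * Real.exp (-x^2)) x := by
  have h1 : HasDerivAt (fun y : ℝ => p.eval y) (p.derivative.eval x) x := p.hasDerivAt x
  have h2 : HasDerivAt (fun y : ℝ => -y^2) (-(2*x)) x := by
    simpa using (hasDerivAt_pow 2 x).fun_neg
  have h3 : HasDerivAt (fun y : ℝ => Real.exp (-y^2)) (Real.exp (-x^2) * (-(2*x))) x := h2.exp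
  have h := h1.fun_mul h3
  refine h.congr_deriv ?_
  simp only [Polynomial.eval_sub, Polynomial.eval_mul, Polynomial.eval_C, Polynomial.eval_X]
  ring

lemma iteratedDeriv_gauss (n : ℕ) (x : ℝ) :
    iteratedDeriv n (fun y : ℝ => Real.exp (-y^2)) x = (gPoly n).eval x * Real.exp (-x^2) := by
  induction n generalizing x with
  | zero => simp [gPoly]
  | succ n ih =>
    rw [iteratedDeriv_succ]
    have h : deriv (iteratedDeriv n fun y : ℝ => Real.exp (-y ^ 2)) x
        = deriv (fun y => (gPoly n).eval y * Real.exp (-y^2)) x := by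
      apply Filter.EventuallyEq.deriv_eq
      filter_upwards with y using ih y
    rw [h, (hasDerivAt_polygauss (gPoly n) x).deriv]
    rfl

lemma poly_growth (p : Polynomial ℝ) :
    ∃ C : ℝ, 0 ≤ C ∧ ∃ d : ℕ, ∀ x : ℝ, |p.eval x| ≤ C * (1+x^2)^d := by
  have one_le : ∀ x : ℝ, (1:ℝ) ≤ 1 + x^2 := fun x => by nlinarith [sq_nonneg x]
  induction p using Polynomial.induction_on with
  | C a => exact ⟨|a|, abs_nonneg a, 0, fun x => by simp⟩
  | add p q hp hq =>
    obtain ⟨C1, hC1, d1, h1⟩ := hp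
    obtain ⟨C2, hC2, d2, h2⟩ := hq
    refine ⟨C1 + C2, by linarith, max d1 d2, fun x => ?_⟩
    have e1 : C1 * (1+x^2)^d1 ≤ C1 * (1+x^2)^(max d1 d2) :=
      mul_le_mul_of_nonneg_left (pow_le_pow_right₀ (one_le x) (le_max_left _ _)) hC1
    have e2 : C2 * (1+x^2)^d2 ≤ C2 * (1+x^2)^(max d1 d2) :=
      mul_le_mul_of_nonneg_left (pow_le_pow_right₀ (one_le x) (le_max_right _ _)) hC2
    calc |(p+q).eval x| ≤ |p.eval x| + |q.eval x| := by
          rw [Polynomial.eval_add]; exact abs_add_le _ _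
      _ ≤ C1 * (1+x^2)^(max d1 d2) + C2 * (1+x^2)^(max d1 d2) := by
          have := h1 x; have := h2 x; linarith
      _ = (C1 + C2) * (1+x^2)^(max d1 d2) := by ring
  | monomial n a hp =>
    obtain ⟨C, hC, d, h⟩ := hp
    refine ⟨C, hC, d+1, fun x => ?_⟩
    have hx : |x| ≤ 1 + x^2 := by
      nlinarith [sq_nonneg (|x| - 1), abs_nonneg x, sq_abs x]
    have : |(Polynomial.C a * Polynomial.X ^ (n+1)).eval x|
        = |(Polynomial.C a * Polynomial.X ^ n).eval x| * |x| := by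
      simp [abs_mul, pow_succ, mul_assoc]
    rw [this, pow_succ]
    have h0 : (0:ℝ) ≤ (1+x^2)^d := by positivity
    calc |(Polynomial.C a * Polynomial.X ^ n).eval x| * |x|
        ≤ (C * (1+x^2)^d) * (1 + x^2) :=
          mul_le_mul (h x) hx (abs_nonneg x) (by positivity)
      _ = C * ((1+x^2)^d * (1+x^2)) := by ring

lemma pow_mul_exp_neg_le (d : ℕ) (t : ℝ) (ht : 0 ≤ t) :
    t^d * Real.exp (-t) ≤ d.factorial := by
  have h1 : t^d / d.factorial ≤ Real.exp t := Real.pow_div_factorial_le_exp (x := t) ht d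
  have h2 : (0:ℝ) < Real.exp t := Real.exp_pos t
  have h3 : (0:ℝ) < (d.factorial : ℝ) := by positivity
  rw [Real.exp_neg]
  rw [div_le_iff₀ h3] at h1
  calc t^d * (Real.exp t)⁻¹ ≤ (Real.exp t * (d.factorial : ℝ)) * (Real.exp t)⁻¹ := by
        apply mul_le_mul_of_nonneg_right h1 (by positivity)
    _ = d.factorial := by field_simp

lemma polygauss_bound (p : Polynomial ℝ) :
    ∃ C, 0 ≤ C ∧ ∀ x : ℝ, |p.eval x| * Real.exp (-x^2) ≤ C := by
  obtain ⟨C, hC, d, h⟩ := poly_growth p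
  refine ⟨C * (2^d * (1 + (d.factorial : ℝ))), by positivity, fun x => ?_⟩
  have key : (1+x^2)^d * Real.exp (-x^2) ≤ 2^d * (1 + (d.factorial : ℝ)) := by
    have hfac : (1:ℝ) ≤ (d.factorial : ℝ) := by exact_mod_cast Nat.one_le_iff_ne_zero.mpr (Nat.factorial_ne_zero d)
    rcases le_total (x^2) 1 with hx | hx
    · have h1 : (1+x^2)^d ≤ 2^d := by
        apply pow_le_pow_left₀ (by positivity) (by linarith)
      have h2 : Real.exp (-x^2) ≤ 1 := Real.exp_le_one_iff.mpr (by nlinarith [sq_nonneg x])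
      calc (1+x^2)^d * Real.exp (-x^2) ≤ 2^d * 1 :=
            mul_le_mul h1 h2 (Real.exp_nonneg _) (by positivity)
        _ ≤ 2^d * (1 + (d.factorial : ℝ)) := by
            apply mul_le_mul_of_nonneg_left (by linarith) (by positivity)
    · have h1 : (1+x^2)^d ≤ (2*x^2)^d := by
        apply pow_le_pow_left₀ (by positivity) (by linarith)
      have h2 : (2*x^2)^d = 2^d * (x^2)^d := by rw [mul_pow]
      have h3 : (x^2)^d * Real.exp (-x^2) ≤ d.factorial :=
        pow_mul_exp_neg_le d (x^2) (sq_nonneg x)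
      calc (1+x^2)^d * Real.exp (-x^2) ≤ (2*x^2)^d * Real.exp (-x^2) :=
            mul_le_mul_of_nonneg_right h1 (Real.exp_nonneg _)
        _ = 2^d * ((x^2)^d * Real.exp (-x^2)) := by rw [h2]; ring
        _ ≤ 2^d * (d.factorial : ℝ) :=
            mul_le_mul_of_nonneg_left h3 (by positivity)
        _ ≤ 2^d * (1 + (d.factorial : ℝ)) := by
            apply mul_le_mul_of_nonneg_left (by linarith) (by positivity)
  calc |p.eval x| * Real.exp (-x^2) ≤ (C * (1+x^2)^d) * Real.exp (-x^2) :=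
        mul_le_mul_of_nonneg_right (h x) (Real.exp_nonneg _)
    _ = C * ((1+x^2)^d * Real.exp (-x^2)) := by ring
    _ ≤ C * (2^d * (1 + (d.factorial : ℝ))) := mul_le_mul_of_nonneg_left key hC

/-- Scaled Gaussian. -/
def gR (R : ℝ) : ℝ → ℝ := fun x => Real.exp (-(R⁻¹ * x)^2)

lemma contDiff_gR (R : ℝ) : ContDiff ℝ (⊤ : ℕ∞) (gR R) :=
  Real.contDiff_exp.comp (((contDiff_const.mul contDiff_id).pow 2).neg)

lemma gR_le_one (R x : ℝ) : gR R x ≤ 1 :=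
  Real.exp_le_one_iff.mpr (by nlinarith [sq_nonneg (R⁻¹ * x)])

lemma gR_sub_one (R x : ℝ) (hR : 1 ≤ R) : |gR R x - 1| ≤ (1+x^2)/R := by
  have hR0 : (0:ℝ) < R := by linarith
  have h1 : |gR R x - 1| = 1 - gR R x := by
    rw [abs_sub_comm, abs_of_nonneg (by linarith [gR_le_one R x])]
  have h2 : 1 - gR R x ≤ (R⁻¹*x)^2 := by
    have := Real.add_one_le_exp (-(R⁻¹*x)^2)
    unfold gR; linarith
  have h3 : (R⁻¹*x)^2 = x^2/R^2 := by
    field_simp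
  have h4 : x^2/R^2 ≤ (1+x^2)/R := by
    rw [div_le_div_iff₀ (by positivity) hR0]
    nlinarith [sq_nonneg x, mul_nonneg (mul_nonneg (sq_nonneg x) hR0.le) (by linarith : (0:ℝ) ≤ R - 1), sq_nonneg R]
  rw [h1, ]
  linarith [h2, h3 ▸ h2]

lemma iteratedDeriv_gR (R : ℝ) (n : ℕ) (x : ℝ) :
    iteratedDeriv n (gR R) x
      = R⁻¹^n * ((gPoly n).eval (R⁻¹*x) * Real.exp (-(R⁻¹*x)^2)) := by
  have h := iteratedDeriv_comp_const_mul (n := n) (f := fun y : ℝ => Real.exp (-y^2))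
    (contDiff_gauss.of_le (by exact_mod_cast le_top)) R⁻¹
  have h2 : iteratedDeriv n (gR R) x
      = R⁻¹^n * iteratedDeriv n (fun y : ℝ => Real.exp (-y^2)) (R⁻¹*x) := by
    have := congrFun h x
    exact this
  rw [h2, iteratedDeriv_gauss]

lemma gR_deriv_bound (m : ℕ) : ∃ M : ℝ, 1 ≤ M ∧ ∀ R : ℝ, 1 ≤ R → ∀ j, j ≤ m → ∀ x : ℝ,
    |iteratedDeriv j (gR R) x| ≤ M ∧ (1 ≤ j → |iteratedDeriv j (gR R) x| ≤ M / R) := by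
  choose Cp hCp0 hCp using fun j => polygauss_bound (gPoly j)
  have hsnn : 0 ≤ ∑ j ∈ Finset.range (m+1), Cp j := Finset.sum_nonneg fun i _ => hCp0 i
  refine ⟨1 + ∑ j ∈ Finset.range (m+1), Cp j, by linarith, fun R hR j hj x => ?_⟩
  have hR0 : (0:ℝ) < R := by linarith
  have hRinv : 0 ≤ R⁻¹ := by positivity
  have hRinv1 : R⁻¹ ≤ 1 := by
    rw [inv_le_one_iff₀]; right; exact hR
  set y := R⁻¹ * x with hy
  have habs : |iteratedDeriv j (gR R) x| = R⁻¹^j * (|(gPoly j).eval y| * Real.exp (-y^2)) := by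
    rw [iteratedDeriv_gR, abs_mul, abs_mul, abs_pow, abs_of_nonneg hRinv,
      abs_of_pos (Real.exp_pos _)]
  have hterm : |(gPoly j).eval y| * Real.exp (-y^2) ≤ Cp j := hCp j y
  have hsum : Cp j ≤ 1 + ∑ i ∈ Finset.range (m+1), Cp i := by
    have : Cp j ≤ ∑ i ∈ Finset.range (m+1), Cp i :=
      Finset.single_le_sum (fun i _ => hCp0 i) (Finset.mem_range.mpr (Nat.lt_succ_of_le hj))
    linarith
  have hnn : 0 ≤ |(gPoly j).eval y| * Real.exp (-y^2) := by positivity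
  constructor
  · rw [habs]
    calc R⁻¹^j * (|(gPoly j).eval y| * Real.exp (-y^2)) ≤ 1 * Cp j := by
          apply mul_le_mul (pow_le_one₀ hRinv hRinv1) hterm hnn zero_le_one
      _ ≤ 1 + ∑ i ∈ Finset.range (m+1), Cp i := by linarith
  · intro hj1
    rw [habs]
    have hpow : R⁻¹^j ≤ R⁻¹ := by
      calc R⁻¹^j ≤ R⁻¹^1 := pow_le_pow_of_le_one hRinv hRinv1 hj1
        _ = R⁻¹ := pow_one _
    calc R⁻¹^j * (|(gPoly j).eval y| * Real.exp (-y^2)) ≤ R⁻¹ * Cp j := by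
          apply mul_le_mul hpow hterm hnn hRinv
      _ ≤ R⁻¹ * (1 + ∑ i ∈ Finset.range (m+1), Cp i) := by
          apply mul_le_mul_of_nonneg_left hsum hRinv
      _ = (1 + ∑ i ∈ Finset.range (m+1), Cp i) / R := by
          rw [inv_mul_eq_div]

lemma gR_decay_bound (m k : ℕ) (R : ℝ) (hR : 1 ≤ R) : ∃ E : ℝ, 0 ≤ E ∧ ∀ j, j ≤ m → ∀ x : ℝ,
    (1+x^2)^k * |iteratedDeriv j (gR R) x| ≤ E := by
  have hR0 : (0:ℝ) < R := by linarith
  choose Cq hCq0 hCq using fun j => polygauss_bound ((1 + Polynomial.X^2)^k * gPoly j)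
  have hsnn : 0 ≤ ∑ j ∈ Finset.range (m+1), Cq j := Finset.sum_nonneg fun i _ => hCq0 i
  refine ⟨R^(2*k) * (1 + ∑ j ∈ Finset.range (m+1), Cq j),
    mul_nonneg (by positivity) (by linarith), fun j hj x => ?_⟩
  set y := R⁻¹ * x with hy
  have hyx : (1+x^2) ≤ R^2 * (1+y^2) := by
    have : R^2 * y^2 = x^2 := by
      rw [hy]; field_simp
    nlinarith [sq_nonneg y, this]
  have hpk : (1+x^2)^k ≤ R^(2*k) * (1+y^2)^k := by
    calc (1+x^2)^k ≤ (R^2 * (1+y^2))^k := pow_le_pow_left₀ (by positivity) hyx k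
      _ = R^(2*k) * (1+y^2)^k := by rw [mul_pow, ← pow_mul]
  have heval : (1+y^2)^k * |(gPoly j).eval y| * Real.exp (-y^2) ≤ Cq j := by
    have h := hCq j y
    have he : |((1 + Polynomial.X^2)^k * gPoly j).eval y|
        = (1+y^2)^k * |(gPoly j).eval y| := by
      rw [Polynomial.eval_mul, abs_mul]
      congr 1
      rw [Polynomial.eval_pow, abs_pow]
      congr 1
      simp [abs_of_nonneg (by positivity : (0:ℝ) ≤ 1 + y^2)]
    rw [he] at h
    linarith [h, mul_assoc ((1+y^2)^k) (|(gPoly j).eval y|) (Real.exp (-y^2))]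
  have hRinv : 0 ≤ R⁻¹ := by positivity
  have hRinv1 : R⁻¹ ≤ 1 := by rw [inv_le_one_iff₀]; right; exact hR
  have habs : |iteratedDeriv j (gR R) x| = R⁻¹^j * (|(gPoly j).eval y| * Real.exp (-y^2)) := by
    rw [iteratedDeriv_gR, abs_mul, abs_mul, abs_pow, abs_of_nonneg hRinv,
      abs_of_pos (Real.exp_pos _)]
  have hsum : Cq j ≤ 1 + ∑ i ∈ Finset.range (m+1), Cq i := by
    have : Cq j ≤ ∑ i ∈ Finset.range (m+1), Cq i :=
      Finset.single_le_sum (fun i _ => hCq0 i) (Finset.mem_range.mpr (Nat.lt_succ_of_le hj))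
    linarith
  have hnn : 0 ≤ |(gPoly j).eval y| * Real.exp (-y^2) := by positivity
  calc (1+x^2)^k * |iteratedDeriv j (gR R) x|
      ≤ (R^(2*k) * (1+y^2)^k) * (R⁻¹^j * (|(gPoly j).eval y| * Real.exp (-y^2))) := by
        rw [habs]
        apply mul_le_mul_of_nonneg_right hpk (by positivity)
    _ ≤ (R^(2*k) * (1+y^2)^k) * (1 * (|(gPoly j).eval y| * Real.exp (-y^2))) := by
        apply mul_le_mul_of_nonneg_left
          (mul_le_mul_of_nonneg_right (pow_le_one₀ hRinv hRinv1) hnn) (by positivity)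
    _ = R^(2*k) * ((1+y^2)^k * |(gPoly j).eval y| * Real.exp (-y^2)) := by ring
    _ ≤ R^(2*k) * Cq j := mul_le_mul_of_nonneg_left heval (by positivity)
    _ ≤ R^(2*k) * (1 + ∑ i ∈ Finset.range (m+1), Cq i) :=
        mul_le_mul_of_nonneg_left hsum (by positivity)

lemma iteratedDeriv_add' {u w : ℝ → ℝ} (hu : ContDiff ℝ (⊤ : ℕ∞) u) (hw : ContDiff ℝ (⊤ : ℕ∞) w)
    (n : ℕ) (x : ℝ) :
    iteratedDeriv n (fun y => u y + w y) x = iteratedDeriv n u x + iteratedDeriv n w x := by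
  simp only [← iteratedDerivWithin_univ]
  exact iteratedDerivWithin_add (Set.mem_univ x) uniqueDiffOn_univ
    (hu.of_le (by exact_mod_cast le_top)).contDiffWithinAt (hw.of_le (by exact_mod_cast le_top)).contDiffWithinAt

lemma iteratedDeriv_sub' {u w : ℝ → ℝ} (hu : ContDiff ℝ (⊤ : ℕ∞) u) (hw : ContDiff ℝ (⊤ : ℕ∞) w)
    (n : ℕ) (x : ℝ) :
    iteratedDeriv n (fun y => u y - w y) x = iteratedDeriv n u x - iteratedDeriv n w x := by
  simp only [← iteratedDerivWithin_univ]
  exact iteratedDerivWithin_sub (Set.mem_univ x) uniqueDiffOn_univ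
    (hu.of_le (by exact_mod_cast le_top)).contDiffWithinAt (hw.of_le (by exact_mod_cast le_top)).contDiffWithinAt

lemma iteratedDeriv_const_zero {n : ℕ} (hn : n ≠ 0) (c x : ℝ) :
    iteratedDeriv n (fun _ : ℝ => c) x = 0 := by
  have h : ‖iteratedDeriv n (fun _ : ℝ => c) x‖ = 0 := by
    rw [← norm_iteratedFDeriv_eq_norm_iteratedDeriv, iteratedFDeriv_const_of_ne hn]
    simp
  simpa using h

lemma iteratedDeriv_shift (φ : ℝ → ℝ) (c : ℝ) (n : ℕ) (x : ℝ) :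
    iteratedDeriv n (fun y => φ (y - c)) x = iteratedDeriv n φ (x - c) := by
  have h := iteratedDeriv_comp_add_const n φ (-c)
  simp only [sub_eq_add_neg]
  exact congrFun h x

lemma leibniz_bound {u w : ℝ → ℝ} (hu : ContDiff ℝ (⊤ : ℕ∞) u) (hw : ContDiff ℝ (⊤ : ℕ∞) w)
    (j : ℕ) (x : ℝ) {A B : ℝ} (hA : 0 ≤ A) (hB : 0 ≤ B)
    (hbu : ∀ i, i ≤ j → |iteratedDeriv i u x| ≤ A)
    (hbw : ∀ i, i ≤ j → |iteratedDeriv i w x| ≤ B) :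
    |iteratedDeriv j (fun y => u y * w y) x| ≤ 2^j * (A * B) := by
  have h := norm_iteratedFDeriv_mul_le (𝕜 := ℝ) hu hw x (n := j) (by exact_mod_cast le_top)
  have habs : |iteratedDeriv j (fun y => u y * w y) x|
      = ‖iteratedFDeriv ℝ j (fun y => u y * w y) x‖ := by
    rw [norm_iteratedFDeriv_eq_norm_iteratedDeriv, Real.norm_eq_abs]
  rw [habs]
  refine h.trans ?_
  have hsum : ∑ i ∈ Finset.range (j+1), (j.choose i : ℝ) * ‖iteratedFDeriv ℝ i u x‖ *
      ‖iteratedFDeriv ℝ (j-i) w x‖ ≤ ∑ i ∈ Finset.range (j+1), (j.choose i : ℝ) * (A * B) := by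
    apply Finset.sum_le_sum
    intro i hi
    have hi' : i ≤ j := Nat.lt_succ_iff.mp (Finset.mem_range.mp hi)
    have h1 : ‖iteratedFDeriv ℝ i u x‖ ≤ A := by
      rw [norm_iteratedFDeriv_eq_norm_iteratedDeriv, Real.norm_eq_abs]; exact hbu i hi'
    have h2 : ‖iteratedFDeriv ℝ (j-i) w x‖ ≤ B := by
      rw [norm_iteratedFDeriv_eq_norm_iteratedDeriv, Real.norm_eq_abs]
      exact hbw (j-i) (Nat.sub_le j i)
    calc (j.choose i : ℝ) * ‖iteratedFDeriv ℝ i u x‖ * ‖iteratedFDeriv ℝ (j-i) w x‖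
        ≤ (j.choose i : ℝ) * A * ‖iteratedFDeriv ℝ (j-i) w x‖ := by
          apply mul_le_mul_of_nonneg_right (mul_le_mul_of_nonneg_left h1 (by positivity))
            (norm_nonneg _)
      _ ≤ (j.choose i : ℝ) * A * B := by
          apply mul_le_mul_of_nonneg_left h2 (by positivity)
      _ = (j.choose i : ℝ) * (A * B) := by ring
  refine hsum.trans ?_
  rw [← Finset.sum_mul]
  have hc : (∑ i ∈ Finset.range (j+1), (j.choose i : ℝ)) = 2^j := by
    rw [← Nat.cast_sum, Nat.sum_range_choose]
    push_cast
    ring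
  rw [hc]

lemma growth_upto {u : ℝ → ℝ} (hu : SlowlyIncreasing u) (m : ℕ) :
    ∃ C : ℝ, 0 ≤ C ∧ ∃ k : ℕ, ∀ j, j ≤ m → ∀ x : ℝ,
      |iteratedDeriv j u x| ≤ C * (1+x^2)^k := by
  choose C hC0 n hCn using hu.2
  have hCnn : ∀ j, 0 ≤ C j := fun j => (hC0 j).le
  have hsnn : 0 ≤ ∑ j ∈ Finset.range (m+1), C j := Finset.sum_nonneg fun i _ => hCnn i
  refine ⟨∑ j ∈ Finset.range (m+1), C j, hsnn, ∑ j ∈ Finset.range (m+1), n j, fun j hj x => ?_⟩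
  have hone : (1:ℝ) ≤ 1 + x^2 := by nlinarith [sq_nonneg x]
  have h1 : C j ≤ ∑ i ∈ Finset.range (m+1), C i :=
    Finset.single_le_sum (fun i _ => hCnn i) (Finset.mem_range.mpr (Nat.lt_succ_of_le hj))
  have h2 : n j ≤ ∑ i ∈ Finset.range (m+1), n i :=
    Finset.single_le_sum (fun i _ => Nat.zero_le _) (Finset.mem_range.mpr (Nat.lt_succ_of_le hj))
  calc |iteratedDeriv j u x| ≤ C j * (1+x^2)^(n j) := by
        have := hCn j x; convert this using 3 <;> ring
    _ ≤ (∑ i ∈ Finset.range (m+1), C i) * (1+x^2)^(∑ i ∈ Finset.range (m+1), n i) := by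
        apply mul_le_mul h1 (pow_le_pow_right₀ hone h2) (by positivity) hsnn

lemma schwartz_poly_bound (v : SchwartzMap ℝ ℝ) (k : ℕ) :
    ∃ S : ℝ, 0 ≤ S ∧ ∀ x : ℝ, |v x| * (1+x^2)^k ≤ S := by
  obtain ⟨C0, hC0pos, hC0⟩ := v.decay 0 0
  obtain ⟨C1, hC1pos, hC1⟩ := v.decay (2*k) 0
  have hv0 : ∀ x : ℝ, |v x| ≤ C0 := by
    intro x
    have := hC0 x
    simpa [norm_iteratedFDeriv_zero, Real.norm_eq_abs] using this
  have hv1 : ∀ x : ℝ, |x|^(2*k) * |v x| ≤ C1 := by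
    intro x
    have := hC1 x
    simpa [norm_iteratedFDeriv_zero, Real.norm_eq_abs] using this
  have hC0nn : 0 ≤ C0 := hC0pos.le
  have hC1nn : 0 ≤ C1 := hC1pos.le
  refine ⟨2^k * (C0 + C1), by positivity, fun x => ?_⟩
  have key : (1+x^2)^k ≤ 2^k * (1 + (x^2)^k) := by
    rcases le_total (x^2) 1 with hx | hx
    · have : (1+x^2)^k ≤ 2^k := pow_le_pow_left₀ (by positivity) (by linarith) k
      nlinarith [pow_nonneg (sq_nonneg x) k, pow_nonneg (by norm_num : (0:ℝ) ≤ 2) k]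
    · have h1 : (1+x^2)^k ≤ (2*x^2)^k := pow_le_pow_left₀ (by positivity) (by linarith) k
      have h2 : (2*x^2)^k = 2^k * (x^2)^k := mul_pow 2 (x^2) k
      nlinarith [pow_nonneg (by norm_num : (0:ℝ) ≤ 2) k]
  have hxk : |v x| * (x^2)^k = |x|^(2*k) * |v x| := by
    rw [← sq_abs, ← pow_mul]
    ring
  calc |v x| * (1+x^2)^k ≤ |v x| * (2^k * (1 + (x^2)^k)) :=
        mul_le_mul_of_nonneg_left key (abs_nonneg _)
    _ = 2^k * (|v x| + |v x| * (x^2)^k) := by ring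
    _ = 2^k * (|v x| + |x|^(2*k) * |v x|) := by rw [hxk]
    _ ≤ 2^k * (C0 + C1) := by
        have := hv0 x; have := hv1 x
        apply mul_le_mul_of_nonneg_left (by linarith) (by positivity)

lemma slowly_sub {f g : ℝ → ℝ} (hf : SlowlyIncreasing f) (hg : SlowlyIncreasing g) :
    SlowlyIncreasing (fun x => f x - g x) := by
  refine ⟨hf.1.sub hg.1, fun j => ?_⟩
  obtain ⟨Cf, hCf0, nf, hCf⟩ := hf.2 j
  obtain ⟨Cg, hCg0, ng, hCg⟩ := hg.2 j
  have hone : ∀ x : ℝ, (1:ℝ) ≤ 1 + x^2 := fun x => by nlinarith [sq_nonneg x]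
  refine ⟨Cf + Cg, by linarith, nf + ng, fun x => ?_⟩
  rw [iteratedDeriv_sub' hf.1 hg.1]
  have h1 : |iteratedDeriv j f x| ≤ Cf * (1+x^2)^(nf+ng) := by
    refine (hCf x).trans ?_
    apply mul_le_mul_of_nonneg_left (pow_le_pow_right₀ (hone x) (Nat.le_add_right _ _)) hCf0.le
  have h2 : |iteratedDeriv j g x| ≤ Cg * (1+x^2)^(nf+ng) := by
    refine (hCg x).trans ?_
    apply mul_le_mul_of_nonneg_left (pow_le_pow_right₀ (hone x) (Nat.le_add_left _ _)) hCg0.le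
  calc |iteratedDeriv j f x - iteratedDeriv j g x|
      ≤ |iteratedDeriv j f x| + |iteratedDeriv j g x| := abs_sub _ _
    _ ≤ Cf * (1+x^2)^(nf+ng) + Cg * (1+x^2)^(nf+ng) := by linarith
    _ = (Cf + Cg) * (1+x^2)^(nf+ng) := by ring

/-- The approximating function. -/
def interp (f g : ℝ → ℝ) (R c : ℝ) : ℝ → ℝ :=
  fun x => f x * gR R x + g (x - c) * gR R (x - c)

/-- The error function. -/
def dfn (a b : ℝ → ℝ) (R c : ℝ) : ℝ → ℝ :=
  fun x => (a x * gR R x - a x) + b (x - c) * gR R (x - c)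

lemma contDiff_shiftmul {b : ℝ → ℝ} (hb : ContDiff ℝ (⊤ : ℕ∞) b) (R c : ℝ) :
    ContDiff ℝ (⊤ : ℕ∞) (fun x => b (x - c) * gR R (x - c)) :=
  (hb.mul (contDiff_gR R)).comp (contDiff_id.sub contDiff_const)

lemma contDiff_dfn {a b : ℝ → ℝ} (ha : ContDiff ℝ (⊤ : ℕ∞) a) (hb : ContDiff ℝ (⊤ : ℕ∞) b) (R c : ℝ) :
    ContDiff ℝ (⊤ : ℕ∞) (dfn a b R c) :=
  ((ha.mul (contDiff_gR R)).sub ha).add (contDiff_shiftmul hb R c)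

lemma contDiff_interp {f g : ℝ → ℝ} (hf : ContDiff ℝ (⊤ : ℕ∞) f) (hg : ContDiff ℝ (⊤ : ℕ∞) g) (R c : ℝ) :
    ContDiff ℝ (⊤ : ℕ∞) (interp f g R c) :=
  (hf.mul (contDiff_gR R)).add (contDiff_shiftmul hg R c)

lemma main_term_bound {a : ℝ → ℝ} (ha : ContDiff ℝ (⊤ : ℕ∞) a) {m : ℕ} {Ca : ℝ} {ka : ℕ}
    (hCa0 : 0 ≤ Ca) (hCa : ∀ i, i ≤ m → ∀ x : ℝ, |iteratedDeriv i a x| ≤ Ca * (1+x^2)^ka)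
    {M R : ℝ} (hM : 1 ≤ M) (hR : 1 ≤ R)
    (hMd : ∀ j, j ≤ m → ∀ x : ℝ,
      |iteratedDeriv j (gR R) x| ≤ M ∧ (1 ≤ j → |iteratedDeriv j (gR R) x| ≤ M / R))
    (j : ℕ) (hj : j ≤ m) (x : ℝ) :
    |iteratedDeriv j (fun y => a y * gR R y - a y) x|
      ≤ 2^m * (Ca * M) * (1+x^2)^(ka+1) / R := by
  have hR0 : (0:ℝ) < R := by linarith
  have hone : (1:ℝ) ≤ 1 + x^2 := by nlinarith [sq_nonneg x]
  have hfun : (fun y => a y * gR R y - a y) = fun y => a y * (gR R y - 1) := by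
    funext y; ring
  rw [hfun]
  have hw : ContDiff ℝ (⊤ : ℕ∞) (fun y => gR R y - 1) := (contDiff_gR R).sub contDiff_const
  have hbw : ∀ i, i ≤ j → |iteratedDeriv i (fun y => gR R y - 1) x| ≤ M * (1+x^2) / R := by
    intro i hi
    rcases Nat.eq_zero_or_pos i with h0 | h1
    · subst h0
      simp only [iteratedDeriv_zero]
      refine (gR_sub_one R x hR).trans ?_
      rw [div_le_div_iff₀ hR0 hR0]
      nlinarith [mul_nonneg (mul_nonneg (sub_nonneg.2 hM) (by positivity : (0:ℝ) ≤ 1+x^2)) hR0.le]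
    · have hsub := iteratedDeriv_sub' (contDiff_gR R) (contDiff_const (c := (1:ℝ))) i x
      rw [hsub, iteratedDeriv_const_zero (Nat.pos_iff_ne_zero.mp h1) 1 x, sub_zero]
      refine ((hMd i (hi.trans hj) x).2 h1).trans ?_
      rw [div_le_div_iff₀ hR0 hR0]
      nlinarith [mul_nonneg (mul_nonneg (le_trans zero_le_one hM) (sq_nonneg x)) hR0.le]
  have h := leibniz_bound ha hw j x (A := Ca * (1+x^2)^ka) (B := M * (1+x^2) / R)
    (by positivity) (by positivity) (fun i hi => hCa i (hi.trans hj) x) hbw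
  refine h.trans ?_
  have h2j : (2:ℝ)^j ≤ 2^m := pow_le_pow_right₀ one_le_two hj
  have e : Ca * (1+x^2)^ka * (M * (1+x^2) / R) = (Ca * M) * (1+x^2)^(ka+1) / R := by
    rw [pow_succ]; ring
  rw [e]
  have hXnn : 0 ≤ (Ca * M) * (1+x^2)^(ka+1) / R := by positivity
  calc (2:ℝ)^j * ((Ca * M) * (1+x^2)^(ka+1) / R)
      ≤ 2^m * ((Ca * M) * (1+x^2)^(ka+1) / R) := mul_le_mul_of_nonneg_right h2j hXnn
    _ = 2^m * (Ca * M) * (1+x^2)^(ka+1) / R := by ring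

lemma cross_term_bound {b : ℝ → ℝ} (hb : ContDiff ℝ (⊤ : ℕ∞) b) {m : ℕ} {Cb : ℝ} {kb : ℕ}
    (hCb0 : 0 ≤ Cb) (hCb : ∀ i, i ≤ m → ∀ x : ℝ, |iteratedDeriv i b x| ≤ Cb * (1+x^2)^kb)
    {R : ℝ} (hR : 1 ≤ R) :
    ∃ E : ℝ, 0 ≤ E ∧ ∀ j, j ≤ m → ∀ y : ℝ,
      |iteratedDeriv j (fun z => b z * gR R z) y| * (1+y^2) ≤ E := by
  obtain ⟨E0, hE00, hE0⟩ := gR_decay_bound m (kb+1) R hR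
  refine ⟨2^m * (Cb * E0), by positivity, fun j hj y => ?_⟩
  have hone : (0:ℝ) < 1 + y^2 := by positivity
  have hB : ∀ i, i ≤ j → |iteratedDeriv i (gR R) y| ≤ E0 / (1+y^2)^(kb+1) := by
    intro i hi
    rw [le_div_iff₀ (by positivity)]
    have h := hE0 i (hi.trans hj) y
    nlinarith [h]
  have h := leibniz_bound hb (contDiff_gR R) j y (A := Cb * (1+y^2)^kb)
    (B := E0 / (1+y^2)^(kb+1)) (by positivity) (by positivity)
    (fun i hi => hCb i (hi.trans hj) y) hB
  have e : Cb * (1+y^2)^kb * (E0 / (1+y^2)^(kb+1)) = Cb * E0 / (1+y^2) := by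
    have hpk : ((1:ℝ)+y^2)^kb ≠ 0 := by positivity
    have hpk1 : ((1:ℝ)+y^2)^(kb+1) ≠ 0 := by positivity
    have h1 : ((1:ℝ)+y^2) ≠ 0 := by positivity
    calc Cb * (1+y^2)^kb * (E0 / (1+y^2)^(kb+1))
        = Cb * E0 * ((1+y^2)^kb / (1+y^2)^(kb+1)) := by ring
      _ = Cb * E0 * (1 / (1+y^2)) := by
          rw [pow_succ (1+y^2) kb, div_mul_eq_div_div, div_self hpk]
      _ = Cb * E0 / (1+y^2) := by ring
  rw [e] at h
  calc |iteratedDeriv j (fun z => b z * gR R z) y| * (1+y^2)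
      ≤ (2^j * (Cb * E0 / (1+y^2))) * (1+y^2) := mul_le_mul_of_nonneg_right h hone.le
    _ = 2^j * (Cb * E0) := by field_simp
    _ ≤ 2^m * (Cb * E0) :=
        mul_le_mul_of_nonneg_right (pow_le_pow_right₀ one_le_two hj) (by positivity)

lemma dfn_est (a b : ℝ → ℝ) (ha : SlowlyIncreasing a) (hb : SlowlyIncreasing b)
    (m : ℕ) (v : SchwartzMap ℝ ℝ) (δ : ℝ) (hδ : 0 < δ) :
    ∃ R₀ : ℝ, 1 ≤ R₀ ∧ ∀ R, R₀ ≤ R → ∃ c₀ : ℝ, 0 ≤ c₀ ∧ ∀ c : ℝ, c₀ ≤ |c| →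
      ∀ j, j ≤ m → ∀ x : ℝ, |v x * iteratedDeriv j (dfn a b R c) x| ≤ δ := by
  obtain ⟨Ca, hCa0, ka, hCa⟩ := growth_upto ha m
  obtain ⟨Cb, hCb0, kb, hCb⟩ := growth_upto hb m
  obtain ⟨M, hM1, hMd⟩ := gR_deriv_bound m
  obtain ⟨S, hS0', hS⟩ := schwartz_poly_bound v (ka+1)
  obtain ⟨S0, hS00, hS0b⟩ := schwartz_poly_bound v 1
  have hQ0 : 0 ≤ 2^m * (Ca * M) * S := by positivity
  set Q := 2^m * (Ca * M) * S with hQ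
  refine ⟨max 1 (2*Q/δ), le_max_left _ _, fun R hR => ?_⟩
  have hR1 : 1 ≤ R := le_trans (le_max_left _ _) hR
  have hR0 : (0:ℝ) < R := by linarith
  obtain ⟨E, hE0, hE⟩ := cross_term_bound hb.1 hCb0 hCb hR1
  have hP0 : 0 ≤ S0 * E := by positivity
  set P := S0 * E with hP
  refine ⟨Real.sqrt (4*(P+1)/δ), Real.sqrt_nonneg _, fun c hc j hj x => ?_⟩
  have hsm1 : ContDiff ℝ (⊤ : ℕ∞) (fun y => a y * gR R y - a y) := (ha.1.mul (contDiff_gR R)).sub ha.1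
  have hsm2 : ContDiff ℝ (⊤ : ℕ∞) (fun y => b (y - c) * gR R (y - c)) := contDiff_shiftmul hb.1 R c
  have hsplit : iteratedDeriv j (dfn a b R c) x
      = iteratedDeriv j (fun y => a y * gR R y - a y) x
        + iteratedDeriv j (fun y => b (y - c) * gR R (y - c)) x :=
    iteratedDeriv_add' hsm1 hsm2 j x
  have h1 : |v x| * |iteratedDeriv j (fun y => a y * gR R y - a y) x| ≤ δ/2 := by
    have hmb := main_term_bound ha.1 hCa0 hCa hM1 hR1 (hMd R hR1) j hj x
    calc |v x| * |iteratedDeriv j (fun y => a y * gR R y - a y) x|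
        ≤ |v x| * (2^m * (Ca * M) * (1+x^2)^(ka+1) / R) :=
          mul_le_mul_of_nonneg_left hmb (abs_nonneg _)
      _ = (2^m * (Ca * M) / R) * (|v x| * (1+x^2)^(ka+1)) := by ring
      _ ≤ (2^m * (Ca * M) / R) * S := mul_le_mul_of_nonneg_left (hS x) (by positivity)
      _ = Q / R := by rw [hQ]; ring
      _ ≤ δ/2 := by
          rw [div_le_iff₀ hR0]
          have h2 : 2*Q/δ ≤ R := le_trans (le_max_right _ _) hR
          rw [div_le_iff₀ hδ] at h2
          nlinarith
  have h2 : |v x| * |iteratedDeriv j (fun y => b (y - c) * gR R (y - c)) x| ≤ δ/2 := by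
    have hshift : iteratedDeriv j (fun y => b (y - c) * gR R (y - c)) x
        = iteratedDeriv j (fun z => b z * gR R z) (x - c) :=
      iteratedDeriv_shift (fun z => b z * gR R z) c j x
    rw [hshift]
    have hW := hE j hj (x - c)
    have hv := hS0b x
    have hc2 : 4*(P+1)/δ ≤ c^2 := by
      have hsq := Real.sq_sqrt (show 0 ≤ 4*(P+1)/δ by positivity)
      calc 4*(P+1)/δ = Real.sqrt (4*(P+1)/δ)^2 := hsq.symm
        _ ≤ |c|^2 := pow_le_pow_left₀ (Real.sqrt_nonneg _) hc 2
        _ = c^2 := sq_abs c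
    have hprod : 1 + c^2/2 ≤ (1+x^2) * (1+(x-c)^2) := by
      nlinarith [sq_nonneg (2*x - c), sq_nonneg x, sq_nonneg (x-c), sq_nonneg (x*(x-c))]
    have ht : (0:ℝ) < (1+x^2)*(1+(x-c)^2) := by positivity
    have hv1 : |v x| * (1+(x^2:ℝ)) ≤ S0 := by
      have := hS0b x
      calc |v x| * (1+x^2) = |v x| * (1+x^2)^1 := by ring
        _ ≤ S0 := this
    have hmul : (|v x| * |iteratedDeriv j (fun z => b z * gR R z) (x - c)|) * ((1+x^2)*(1+(x-c)^2))
        ≤ S0 * E := by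
      calc (|v x| * |iteratedDeriv j (fun z => b z * gR R z) (x - c)|) * ((1+x^2)*(1+(x-c)^2))
          = (|v x| * (1+x^2)) * (|iteratedDeriv j (fun z => b z * gR R z) (x - c)| * (1+(x-c)^2)) := by
            ring
        _ ≤ S0 * E := mul_le_mul hv1 hW (by positivity) hS00
    have hc2pos : (0:ℝ) < c^2 := lt_of_lt_of_le (by positivity) hc2
    have step1 : |v x| * |iteratedDeriv j (fun z => b z * gR R z) (x - c)|
        ≤ (S0*E) / ((1+x^2)*(1+(x-c)^2)) := (le_div_iff₀ ht).2 hmul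
    have step2 : (S0*E) / ((1+x^2)*(1+(x-c)^2)) ≤ (S0*E)/(c^2/2) := by
      apply div_le_div_of_nonneg_left hP0 (by positivity) (by linarith)
    have step3 : (S0*E)/(c^2/2) ≤ δ/2 := by
      rw [div_le_iff₀ (by positivity)]
      have h4 : 4*(P+1) ≤ c^2 * δ := by
        have := (div_le_iff₀ hδ).1 hc2
        linarith
      rw [← hP] at *
      nlinarith
    linarith
  rw [hsplit, abs_mul]
  have h3 := abs_add_le (iteratedDeriv j (fun y => a y * gR R y - a y) x)
    (iteratedDeriv j (fun y => b (y - c) * gR R (y - c)) x)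
  have h4 := mul_le_mul_of_nonneg_left h3 (abs_nonneg (v x))
  rw [mul_add] at h4
  linarith

lemma slowly_interp {f g : ℝ → ℝ} (hf : SlowlyIncreasing f) (hg : SlowlyIncreasing g)
    {R : ℝ} (hR : 1 ≤ R) (c : ℝ) : SlowlyIncreasing (interp f g R c) := by
  refine ⟨contDiff_interp hf.1 hg.1 R c, fun j => ?_⟩
  obtain ⟨Cf, hCf0, kf, hCf⟩ := growth_upto hf j
  obtain ⟨Cg, hCg0, kg, hCg⟩ := growth_upto hg j
  obtain ⟨M, hM1, hMd⟩ := gR_deriv_bound j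
  have hgb : ∀ i, i ≤ j → ∀ x : ℝ, |iteratedDeriv i (gR R) x| ≤ M :=
    fun i hi x => (hMd R hR i hi x).1
  have hone : ∀ x : ℝ, (1:ℝ) ≤ 1 + x^2 := fun x => by nlinarith [sq_nonneg x]
  refine ⟨2^j * ((Cf + Cg) * M) * (2*(1+c^2))^(kf+kg) + 1, by positivity, kf + kg, fun x => ?_⟩
  have hsm1 : ContDiff ℝ (⊤ : ℕ∞) (fun y => f y * gR R y) := hf.1.mul (contDiff_gR R)
  have hsm2 : ContDiff ℝ (⊤ : ℕ∞) (fun y => g (y - c) * gR R (y - c)) := contDiff_shiftmul hg.1 R c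
  have hsplit : iteratedDeriv j (interp f g R c) x
      = iteratedDeriv j (fun y => f y * gR R y) x
        + iteratedDeriv j (fun y => g (y - c) * gR R (y - c)) x :=
    iteratedDeriv_add' hsm1 hsm2 j x
  have hb1 : |iteratedDeriv j (fun y => f y * gR R y) x| ≤ 2^j * ((Cf * (1+x^2)^kf) * M) :=
    leibniz_bound hf.1 (contDiff_gR R) j x (by positivity) (by linarith)
      (fun i hi => hCf i hi x) (fun i hi => hgb i hi x)
  have hb2' : |iteratedDeriv j (fun z => g z * gR R z) (x - c)|
      ≤ 2^j * ((Cg * (1+(x-c)^2)^kg) * M) :=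
    leibniz_bound hg.1 (contDiff_gR R) j (x - c) (by positivity) (by linarith)
      (fun i hi => hCg i hi (x - c)) (fun i hi => hgb i hi (x - c))
  have hshift : iteratedDeriv j (fun y => g (y - c) * gR R (y - c)) x
      = iteratedDeriv j (fun z => g z * gR R z) (x - c) :=
    iteratedDeriv_shift (fun z => g z * gR R z) c j x
  have hgrow : (1+(x-c)^2) ≤ (2*(1+c^2)) * (1+x^2) := by
    nlinarith [sq_nonneg (x+c), sq_nonneg x, sq_nonneg c, sq_nonneg (x*c)]
  have hA1 : (1:ℝ) ≤ 2*(1+c^2) := by nlinarith [sq_nonneg c]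
  set k := kf + kg with hk
  set A := 2*(1+c^2) with hA
  have hAk : (1:ℝ) ≤ A^k := one_le_pow₀ hA1
  have hBnn : (0:ℝ) ≤ A^k * (1+x^2)^k := by positivity
  have t1 : |iteratedDeriv j (fun y => f y * gR R y) x|
      ≤ 2^j * (Cf*M) * (A^k * (1+x^2)^k) := by
    refine hb1.trans ?_
    have e : (2:ℝ)^j * ((Cf * (1+x^2)^kf) * M) = 2^j * (Cf*M) * (1 * (1+x^2)^kf) := by ring
    rw [e]
    apply mul_le_mul_of_nonneg_left _ (by positivity)
    exact mul_le_mul hAk (pow_le_pow_right₀ (hone x) (Nat.le_add_right _ _)) (by positivity)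
      (by positivity)
  have t2 : |iteratedDeriv j (fun y => g (y - c) * gR R (y - c)) x|
      ≤ 2^j * (Cg*M) * (A^k * (1+x^2)^k) := by
    rw [hshift]
    refine hb2'.trans ?_
    have e : (2:ℝ)^j * ((Cg * (1+(x-c)^2)^kg) * M) = 2^j * (Cg*M) * (1+(x-c)^2)^kg := by ring
    rw [e]
    apply mul_le_mul_of_nonneg_left _ (by positivity)
    calc (1+(x-c)^2)^kg ≤ A^kg * (1+x^2)^kg := by
          calc (1+(x-c)^2)^kg ≤ (A * (1+x^2))^kg := pow_le_pow_left₀ (by positivity) hgrow kg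
            _ = A^kg * (1+x^2)^kg := mul_pow _ _ _
      _ ≤ A^k * (1+x^2)^k :=
          mul_le_mul (pow_le_pow_right₀ hA1 (Nat.le_add_left _ _))
            (pow_le_pow_right₀ (hone x) (Nat.le_add_left _ _)) (by positivity) (by positivity)
  have hxk1 : (1:ℝ) ≤ (1+x^2)^k := one_le_pow₀ (hone x)
  rw [hsplit]
  calc |iteratedDeriv j (fun y => f y * gR R y) x
        + iteratedDeriv j (fun y => g (y - c) * gR R (y - c)) x|
      ≤ |iteratedDeriv j (fun y => f y * gR R y) x|
        + |iteratedDeriv j (fun y => g (y - c) * gR R (y - c)) x| := abs_add_le _ _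
    _ ≤ 2^j * ((Cf + Cg) * M) * (A^k * (1+x^2)^k) := by linarith
    _ = (2^j * ((Cf + Cg) * M) * A^k) * (1+x^2)^k := by ring
    _ ≤ (2^j * ((Cf + Cg) * M) * A^k + 1) * (1+x^2)^k := by nlinarith [hxk1]

lemma pOM_le_of {m : ℕ} {v : SchwartzMap ℝ ℝ} {u : ℝ → ℝ} {c : ℝ} (hc : 0 ≤ c)
    (h : ∀ x : ℝ, ∀ j : ℕ, j ≤ m → |v x * iteratedDeriv j u x| ≤ c) : pOM m v u ≤ c := by
  refine Real.iSup_le (fun x => Real.iSup_le (fun j => h x j.1 (Nat.lt_succ_iff.mp j.2)) hc) hc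

lemma le_pOM {m : ℕ} {v : SchwartzMap ℝ ℝ} {u : ℝ → ℝ} {B : ℝ}
    (hB : ∀ x : ℝ, ∀ j : ℕ, j ≤ m → |v x * iteratedDeriv j u x| ≤ B) :
    ∀ x : ℝ, ∀ j : ℕ, j ≤ m → |v x * iteratedDeriv j u x| ≤ pOM m v u := by
  have hB0 : 0 ≤ B := le_trans (abs_nonneg _) (hB 0 0 (Nat.zero_le m))
  intro x j hj
  have h1 : |v x * iteratedDeriv j u x| ≤ ⨆ i : Fin (m+1), |v x * iteratedDeriv i.1 u x| :=
    le_ciSup (f := fun i : Fin (m+1) => |v x * iteratedDeriv i.1 u x|)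
      (Set.Finite.bddAbove (Set.finite_range _)) (⟨j, Nat.lt_succ_of_le hj⟩ : Fin (m+1))
  refine h1.trans ?_
  have hb : BddAbove (Set.range fun x : ℝ => ⨆ i : Fin (m+1), |v x * iteratedDeriv i.1 u x|) := by
    refine ⟨B, ?_⟩
    rintro y ⟨x', rfl⟩
    exact Real.iSup_le (fun i => hB x' i.1 (Nat.lt_succ_iff.mp i.2)) hB0
  exact le_ciSup hb x

lemma pOM_nonneg (m : ℕ) (v : SchwartzMap ℝ ℝ) (u : ℝ → ℝ) : 0 ≤ pOM m v u :=
  Real.iSup_nonneg fun _ => Real.iSup_nonneg fun _ => abs_nonneg _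

lemma pOM_bdd {u : ℝ → ℝ} (hu : SlowlyIncreasing u) (m : ℕ) (v : SchwartzMap ℝ ℝ) :
    ∃ B : ℝ, ∀ x : ℝ, ∀ j : ℕ, j ≤ m → |v x * iteratedDeriv j u x| ≤ B := by
  obtain ⟨C, hC0, k, hC⟩ := growth_upto hu m
  obtain ⟨S, hS0, hS⟩ := schwartz_poly_bound v k
  refine ⟨C * S, fun x j hj => ?_⟩
  rw [abs_mul]
  calc |v x| * |iteratedDeriv j u x| ≤ |v x| * (C * (1+x^2)^k) :=
        mul_le_mul_of_nonneg_left (hC j hj x) (abs_nonneg _)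
    _ = C * (|v x| * (1+x^2)^k) := by ring
    _ ≤ C * S := mul_le_mul_of_nonneg_left (hS x) hC0

end OMaux

open OMaux in
theorem statement6 (β : ℝ) (hβ : β ≠ 0) (ψ : OM)
    (hψ : ψ.toFun = fun x : ℝ => x + β)
    (T : OM → OM) (hT : ∀ f : OM, (T f).toFun = f.toFun ∘ ψ.toFun) :
    TopologicallyMixing T := by
  have hβ0 : 0 < |β| := abs_pos.mpr hβ
  -- iterate formula
  have hTn : ∀ (k : ℕ) (u : OM), (T^[k] u).toFun = fun x => u.toFun (x + k * β) := by
    intro k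
    induction k with
    | zero => intro u; simp
    | succ k ih =>
      intro u
      rw [Function.iterate_succ_apply, ih (T u), hT u, hψ]
      funext x
      simp only [Function.comp_apply]
      congr 1
      push_cast
      ring
  intro U V hU hV ⟨f, hfU⟩ ⟨g, hgV⟩
  set S : Set (Set OM) :=
    { W : Set OM | ∃ (g : OM) (m : ℕ) (v : SchwartzMap ℝ ℝ) (ε : ℝ), 0 < ε ∧
        W = { f : OM | pOM m v (fun x => f.toFun x - g.toFun x) < ε } } with hS
  have hb := TopologicalSpace.isTopologicalBasis_of_subbasis (s := S) rfl
  obtain ⟨W1, ⟨t1, ⟨ht1fin, ht1sub⟩, rfl⟩, hfW1, hW1U⟩ := hb.exists_subset_of_mem_open hfU hU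
  obtain ⟨W2, ⟨t2, ⟨ht2fin, ht2sub⟩, rfl⟩, hgW2, hW2V⟩ := hb.exists_subset_of_mem_open hgV hV
  haveI : Fintype ↥t1 := ht1fin.fintype
  haveI : Fintype ↥t2 := ht2fin.fintype
  set fT := f.toFun with hfT
  set gT := g.toFun with hgT
  -- data for the balls of t1
  have hdata1 : ∀ w : t1, ∃ (gw : OM) (mw : ℕ) (vw : SchwartzMap ℝ ℝ) (εw : ℝ), 0 < εw ∧
      (w : Set OM) = { u : OM | pOM mw vw (fun x => u.toFun x - gw.toFun x) < εw } :=
    fun w => ht1sub w.2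
  choose g1 m1 v1 ε1 hε1 heq1 using hdata1
  have hdata2 : ∀ w : t2, ∃ (gw : OM) (mw : ℕ) (vw : SchwartzMap ℝ ℝ) (εw : ℝ), 0 < εw ∧
      (w : Set OM) = { u : OM | pOM mw vw (fun x => u.toFun x - gw.toFun x) < εw } :=
    fun w => ht2sub w.2
  choose g2 m2 v2 ε2 hε2 heq2 using hdata2
  -- f is in each ball of t1
  have hf1 : ∀ w : t1, pOM (m1 w) (v1 w) (fun x => fT x - (g1 w).toFun x) < ε1 w := by
    intro w
    have hm : f ∈ (w : Set OM) := hfW1 w w.2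
    rw [heq1 w] at hm
    exact hm
  have hg2 : ∀ w : t2, pOM (m2 w) (v2 w) (fun x => gT x - (g2 w).toFun x) < ε2 w := by
    intro w
    have hm : g ∈ (w : Set OM) := hgW2 w w.2
    rw [heq2 w] at hm
    exact hm
  set δ1 : t1 → ℝ := fun w => ε1 w - pOM (m1 w) (v1 w) (fun x => fT x - (g1 w).toFun x) with hδ1
  set δ2 : t2 → ℝ := fun w => ε2 w - pOM (m2 w) (v2 w) (fun x => gT x - (g2 w).toFun x) with hδ2
  have hδ1pos : ∀ w, 0 < δ1 w := fun w => sub_pos.mpr (hf1 w)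
  have hδ2pos : ∀ w, 0 < δ2 w := fun w => sub_pos.mpr (hg2 w)
  -- estimates
  have hest1 : ∀ w : t1, ∃ R₀ : ℝ, 1 ≤ R₀ ∧ ∀ R, R₀ ≤ R → ∃ c₀ : ℝ, 0 ≤ c₀ ∧
      ∀ c : ℝ, c₀ ≤ |c| → ∀ j, j ≤ m1 w → ∀ x : ℝ,
        |v1 w x * iteratedDeriv j (dfn fT gT R c) x| ≤ δ1 w / 2 :=
    fun w => dfn_est fT gT f.slowly g.slowly (m1 w) (v1 w) (δ1 w / 2) (by
      have := hδ1pos w; positivity)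
  have hest2 : ∀ w : t2, ∃ R₀ : ℝ, 1 ≤ R₀ ∧ ∀ R, R₀ ≤ R → ∃ c₀ : ℝ, 0 ≤ c₀ ∧
      ∀ c : ℝ, c₀ ≤ |c| → ∀ j, j ≤ m2 w → ∀ x : ℝ,
        |v2 w x * iteratedDeriv j (dfn gT fT R c) x| ≤ δ2 w / 2 :=
    fun w => dfn_est gT fT g.slowly f.slowly (m2 w) (v2 w) (δ2 w / 2) (by
      have := hδ2pos w; positivity)
  choose R1 hR11 hR1 using hest1
  choose R2 hR21 hR2 using hest2
  set R : ℝ := 1 + (∑ w : t1, R1 w) + (∑ w : t2, R2 w) with hRdef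
  have hs1nn : 0 ≤ ∑ w : t1, R1 w := Finset.sum_nonneg fun w _ => le_trans zero_le_one (hR11 w)
  have hs2nn : 0 ≤ ∑ w : t2, R2 w := Finset.sum_nonneg fun w _ => le_trans zero_le_one (hR21 w)
  have hR1le : ∀ w : t1, R1 w ≤ R := by
    intro w
    have : R1 w ≤ ∑ w' : t1, R1 w' :=
      Finset.single_le_sum (fun w' _ => le_trans zero_le_one (hR11 w')) (Finset.mem_univ w)
    rw [hRdef]; linarith
  have hR2le : ∀ w : t2, R2 w ≤ R := by
    intro w
    have : R2 w ≤ ∑ w' : t2, R2 w' :=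
      Finset.single_le_sum (fun w' _ => le_trans zero_le_one (hR21 w')) (Finset.mem_univ w)
    rw [hRdef]; linarith
  have hR1' : 1 ≤ R := by rw [hRdef]; linarith
  choose c1 hc10 hc1 using fun w : t1 => hR1 w R (hR1le w)
  choose c2 hc20 hc2 using fun w : t2 => hR2 w R (hR2le w)
  set c₀ : ℝ := (∑ w : t1, c1 w) + (∑ w : t2, c2 w) with hc₀def
  have hcs1nn : 0 ≤ ∑ w : t1, c1 w := Finset.sum_nonneg fun w _ => hc10 w
  have hcs2nn : 0 ≤ ∑ w : t2, c2 w := Finset.sum_nonneg fun w _ => hc20 w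
  have hc1le : ∀ w : t1, c1 w ≤ c₀ := by
    intro w
    have : c1 w ≤ ∑ w' : t1, c1 w' :=
      Finset.single_le_sum (fun w' _ => hc10 w') (Finset.mem_univ w)
    rw [hc₀def]; linarith
  have hc2le : ∀ w : t2, c2 w ≤ c₀ := by
    intro w
    have : c2 w ≤ ∑ w' : t2, c2 w' :=
      Finset.single_le_sum (fun w' _ => hc20 w') (Finset.mem_univ w)
    rw [hc₀def]; linarith
  refine ⟨⌈c₀ / |β|⌉₊, fun n hn => ?_⟩
  set c : ℝ := (n : ℝ) * β with hcdef
  have hcabs : c₀ ≤ |c| := by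
    have h1 : c₀ / |β| ≤ (⌈c₀ / |β|⌉₊ : ℝ) := Nat.le_ceil _
    have h2 : ((⌈c₀ / |β|⌉₊ : ℕ) : ℝ) ≤ (n : ℝ) := Nat.cast_le.mpr hn
    have h3 : c₀ / |β| ≤ (n : ℝ) := le_trans h1 h2
    have h4 : c₀ ≤ (n : ℝ) * |β| := by
      rw [div_le_iff₀ hβ0] at h3
      linarith
    rw [hcdef, abs_mul, Nat.abs_cast]
    exact h4
  -- the approximating element
  set h : OM := ⟨interp fT gT R c, slowly_interp f.slowly g.slowly hR1' c⟩ with hhdef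
  have hh1 : h ∈ ⋂₀ t1 := by
    rintro w hw
    have : h ∈ ((⟨w, hw⟩ : t1) : Set OM) → h ∈ w := fun hx => hx
    apply this
    rw [heq1 ⟨w, hw⟩]
    set w' : t1 := ⟨w, hw⟩
    show pOM (m1 w') (v1 w') (fun x => h.toFun x - (g1 w').toFun x) < ε1 w'
    have hfun : (fun x => h.toFun x - (g1 w').toFun x)
        = fun x => (fT x - (g1 w').toFun x) + dfn fT gT R c x := by
      funext x
      show interp fT gT R c x - (g1 w').toFun x = _
      simp only [interp, dfn]
      ring
    rw [hfun]
    obtain ⟨B, hB⟩ := pOM_bdd (slowly_sub f.slowly (g1 w').slowly) (m1 w') (v1 w')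
    have hle := le_pOM hB
    have hpt : ∀ x : ℝ, ∀ j : ℕ, j ≤ m1 w' →
        |v1 w' x * iteratedDeriv j (fun x => (fT x - (g1 w').toFun x) + dfn fT gT R c x) x|
          ≤ pOM (m1 w') (v1 w') (fun x => fT x - (g1 w').toFun x) + δ1 w' / 2 := by
      intro x j hj
      have hadd := iteratedDeriv_add' (slowly_sub f.slowly (g1 w').slowly).1
        (contDiff_dfn f.slowly.1 g.slowly.1 R c) j x
      rw [hadd, mul_add]
      refine (abs_add_le _ _).trans ?_
      exact add_le_add (hle x j hj) (hc1 w' c (le_trans (hc1le w') hcabs) j hj x)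
    have hpom := pOM_le_of (add_nonneg (pOM_nonneg (m1 w') (v1 w')
      (fun x => fT x - (g1 w').toFun x)) (le_of_lt (half_pos (hδ1pos w')))) hpt
    have := hδ1pos w'
    rw [hδ1] at this
    calc pOM (m1 w') (v1 w') (fun x => (fT x - (g1 w').toFun x) + dfn fT gT R c x)
        ≤ pOM (m1 w') (v1 w') (fun x => fT x - (g1 w').toFun x) + δ1 w' / 2 := hpom
      _ < ε1 w' := by
          have hh := hδ1pos w'
          simp only [hδ1] at hh ⊢
          linarith
  have hh2 : T^[n] h ∈ ⋂₀ t2 := by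
    rintro w hw
    have : T^[n] h ∈ ((⟨w, hw⟩ : t2) : Set OM) → T^[n] h ∈ w := fun hx => hx
    apply this
    rw [heq2 ⟨w, hw⟩]
    set w' : t2 := ⟨w, hw⟩
    show pOM (m2 w') (v2 w') (fun x => (T^[n] h).toFun x - (g2 w').toFun x) < ε2 w'
    have hfun : (fun x => (T^[n] h).toFun x - (g2 w').toFun x)
        = fun x => (gT x - (g2 w').toFun x) + dfn gT fT R (-c) x := by
      funext x
      rw [hTn n h]
      show interp fT gT R c (x + n * β) - (g2 w').toFun x = _
      simp only [interp, dfn, ← hcdef, add_sub_cancel_right, sub_neg_eq_add]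
      ring
    rw [hfun]
    obtain ⟨B, hB⟩ := pOM_bdd (slowly_sub g.slowly (g2 w').slowly) (m2 w') (v2 w')
    have hle := le_pOM hB
    have hcabs' : c2 w' ≤ |(-c)| := by
      rw [abs_neg]
      exact le_trans (hc2le w') hcabs
    have hpt : ∀ x : ℝ, ∀ j : ℕ, j ≤ m2 w' →
        |v2 w' x * iteratedDeriv j (fun x => (gT x - (g2 w').toFun x) + dfn gT fT R (-c) x) x|
          ≤ pOM (m2 w') (v2 w') (fun x => gT x - (g2 w').toFun x) + δ2 w' / 2 := by
      intro x j hj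
      have hadd := iteratedDeriv_add' (slowly_sub g.slowly (g2 w').slowly).1
        (contDiff_dfn g.slowly.1 f.slowly.1 R (-c)) j x
      rw [hadd, mul_add]
      refine (abs_add_le _ _).trans ?_
      exact add_le_add (hle x j hj) (hc2 w' (-c) hcabs' j hj x)
    have hpom := pOM_le_of (add_nonneg (pOM_nonneg (m2 w') (v2 w')
      (fun x => gT x - (g2 w').toFun x)) (le_of_lt (half_pos (hδ2pos w')))) hpt
    calc pOM (m2 w') (v2 w') (fun x => (gT x - (g2 w').toFun x) + dfn gT fT R (-c) x)
        ≤ pOM (m2 w') (v2 w') (fun x => gT x - (g2 w').toFun x) + δ2 w' / 2 := hpom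
      _ < ε2 w' := by
          have hh := hδ2pos w'
          simp only [hδ2] at hh ⊢
          linarith
  exact ⟨T^[n] h, Set.mem_image_of_mem _ (hW1U hh1), hW2V hh2⟩


end
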